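/- arXiv:2506.16864 — 2 statements merged into one kernel-verified Lean document; each statement's English description precedes it below -/
import Mathlib

section
/- Let k ≥ 1, let A and B be k-connected simple graphs, and let f : V(A) → V(B) be a function such that for every vertex a of A, the set {f(a') : a' a neighbour of a in A} has at least k elements. Then the Sierpiński product A ⊗_f B is k-connected. -/
/-- The Sierpiński product of simple graphs `A` and `B` with respect to `f : V(A) → V(B)`:
vertices are pairs `(a, b)`; two vertices are adjacent iff they lie in the same fibre and
their second coordinates are adjacent in `B`, or their first coordinates are adjacent in `A`
and the second coordinates are given by `f` applied to the other first coordinate. -/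
def SierpinskiProd {α β : Type*} (A : SimpleGraph α) (B : SimpleGraph β)
    (f : α → β) : SimpleGraph (α × β) where
  Adj p q := (p.1 = q.1 ∧ B.Adj p.2 q.2) ∨
    (A.Adj p.1 q.1 ∧ p.2 = f q.1 ∧ q.2 = f p.1)
  symm := ⟨by
    rintro ⟨a₁, b₁⟩ ⟨a₂, b₂⟩ (⟨h, hB⟩ | ⟨hA, h₁, h₂⟩)
    · exact Or.inl ⟨h.symm, hB.symm⟩
    · exact Or.inr ⟨hA.symm, h₂, h₁⟩⟩
  loopless := ⟨by
    rintro ⟨a, b⟩ (⟨_, hB⟩ | ⟨hA, _, _⟩)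
    · exact B.irrefl hB
    · exact A.irrefl hA⟩

/-- A vertex `v` of a graph `G` is a separating vertex if deleting `v` (taking the induced
subgraph on the remaining vertices) yields a graph that is not connected. -/
def IsSeparatingVertex {V : Type*} (G : SimpleGraph V) (v : V) : Prop :=
  ¬ (G.induce ({v}ᶜ : Set V)).Connected

/-- A graph `G` is `k`-connected if it has more than `k` vertices and deleting any set of
fewer than `k` vertices leaves a connected graph. -/
def KConnected {V : Type*} [Fintype V] (k : ℕ) (G : SimpleGraph V) : Prop :=
  k < Fintype.card V ∧ ∀ S : Set V, S.ncard < k → (G.induce Sᶜ).Connected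

/-- `W` is a cut-set of `G` if deleting all vertices of `W` strictly increases the number of
connected components. -/
def IsCutSet {V : Type*} (G : SimpleGraph V) (W : Set V) : Prop :=
  Nat.card G.ConnectedComponent < Nat.card (G.induce Wᶜ).ConnectedComponent

/-- `W` is a minimal cut-set of `G` if it is a cut-set and no proper subset is a cut-set. -/
def IsMinCutSet {V : Type*} (G : SimpleGraph V) (W : Set V) : Prop :=
  IsCutSet G W ∧ ∀ W' ⊂ W, ¬ IsCutSet G W'

/-!
Delete a set `S` of fewer than `k` vertices from `A ⊗_f B`. Each fibre `{a} × B` loses fewer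
than `k` vertices, so what is left of it is connected; the set `T` of first coordinates of `S`
has fewer than `k` elements, so `A - T` is connected. The fibres over `A - T` are untouched and
the cross edges `(a, f a') — (a', f a)` along edges of `A - T` tie them into one component.
Every other remaining vertex `(a, b)` reaches this component: the neighbours of `a` have at
least `k` images under `f`, and a deleted vertex `s` can block only the one with image `s.2`
(when `s.1 = a`) or `f s.1` (when `s.1 ≠ a`), so some cross edge from the fibre of `a` into
an untouched fibre survives.
-/

lemma Set.ncard_preimage_prodMk_le {α β : Type*} {S : Set (α × β)} (hS : S.Finite) (a : α) :
    (Prod.mk a ⁻¹' S).ncard ≤ S.ncard :=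
  Set.ncard_le_ncard_of_injOn (Prod.mk a) (fun _ hb ↦ hb) (Prod.mk_right_injective a).injOn hS

lemma SimpleGraph.exists_adj_fst_notMem_of_ncard_lt {α β : Type*} (A : SimpleGraph α)
    (f : α → β) {S : Set (α × β)} (hS : S.Finite) (a : α)
    (hcard : S.ncard < (f '' A.neighborSet a).ncard) :
    ∃ a', A.Adj a a' ∧ a' ∉ Prod.fst '' S ∧ (a, f a') ∉ S := by
  by_contra! hblocked
  set P := S ∩ Prod.fst ⁻¹' {a}
  set Q := S \ Prod.fst ⁻¹' {a}
  have hsub : f '' A.neighborSet a ⊆ Prod.snd '' P ∪ f '' (Prod.fst '' Q) := by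
    rintro _ ⟨a', ha', rfl⟩
    by_cases hT : a' ∈ Prod.fst '' S
    · obtain ⟨s, hs, rfl⟩ := hT
      exact Or.inr ⟨s.1, ⟨s, ⟨hs, fun h ↦ A.ne_of_adj ha' h.symm⟩, rfl⟩, rfl⟩
    · exact Or.inl ⟨(a, f a'), ⟨hblocked a' ha' hT, rfl⟩, rfl⟩
  have hP : P.Finite := hS.inter_of_left _
  have hQ : Q.Finite := hS.sdiff
  have hle := calc (f '' A.neighborSet a).ncard
      ≤ (Prod.snd '' P ∪ f '' (Prod.fst '' Q)).ncard :=
        Set.ncard_le_ncard hsub ((hP.image _).union ((hQ.image _).image _))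
    _ ≤ P.ncard + Q.ncard :=
        (Set.ncard_union_le _ _).trans <| add_le_add (Set.ncard_image_le hP)
          ((Set.ncard_image_le (hQ.image _)).trans (Set.ncard_image_le hQ))
    _ = S.ncard := Set.ncard_inter_add_ncard_sdiff_eq_ncard _ _ hS
  exact hle.not_gt hcard

namespace SierpinskiProd

variable {α β : Type*} {A : SimpleGraph α} {B : SimpleGraph β} {f : α → β}
  {S : Set (α × β)}

lemma adj_of_adj {a a' : α} (h : A.Adj a a') :
    (SierpinskiProd A B f).Adj (a, f a') (a', f a) :=
  Or.inr ⟨h, rfl, rfl⟩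

def fibreHom (A : SimpleGraph α) (f : α → β) (S : Set (α × β)) (a : α) :
    B.induce (Prod.mk a ⁻¹' S)ᶜ →g (SierpinskiProd A B f).induce Sᶜ where
  toFun b := ⟨(a, b.1), b.2⟩
  map_rel' h := Or.inl ⟨rfl, h⟩

lemma reachable_of_fibre_connected {a : α} (hfib : (B.induce (Prod.mk a ⁻¹' S)ᶜ).Connected)
    {b₁ b₂ : β} (h₁ : (a, b₁) ∈ Sᶜ) (h₂ : (a, b₂) ∈ Sᶜ) :
    ((SierpinskiProd A B f).induce Sᶜ).Reachable ⟨(a, b₁), h₁⟩ ⟨(a, b₂), h₂⟩ :=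
  (hfib.preconnected ⟨b₁, h₁⟩ ⟨b₂, h₂⟩).map (fibreHom A f S a)

lemma mk_mem_compl_of_fst_notMem {a : α} (ha : a ∉ Prod.fst '' S) (b : β) : (a, b) ∈ Sᶜ :=
  fun h ↦ ha (Set.mem_image_of_mem Prod.fst h)

lemma reachable_of_reachable_fst (hfib : ∀ a, (B.induce (Prod.mk a ⁻¹' S)ᶜ).Connected)
    {x y : ↥(Prod.fst '' S)ᶜ} (hxy : (A.induce (Prod.fst '' S)ᶜ).Reachable x y)
    {b₁ b₂ : β} (h₁ : (x.1, b₁) ∈ Sᶜ) (h₂ : (y.1, b₂) ∈ Sᶜ) :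
    ((SierpinskiProd A B f).induce Sᶜ).Reachable ⟨(x.1, b₁), h₁⟩ ⟨(y.1, b₂), h₂⟩ := by
  obtain ⟨w⟩ := hxy
  induction w generalizing b₁ with
  | nil => exact reachable_of_fibre_connected (hfib _) h₁ h₂
  | @cons u v _ huv _ ih =>
    have hu : (u.1, f v.1) ∈ Sᶜ := mk_mem_compl_of_fst_notMem u.2 _
    have hv : (v.1, f u.1) ∈ Sᶜ := mk_mem_compl_of_fst_notMem v.2 _
    have hcross : ((SierpinskiProd A B f).induce Sᶜ).Adj ⟨_, hu⟩ ⟨_, hv⟩ := adj_of_adj huv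
    exact (reachable_of_fibre_connected (hfib _) h₁ hu).trans
      (hcross.reachable.trans (ih hv h₂))


lemma exists_reachable_fst_notMem (hS : S.Finite) {a : α}
    (hcard : S.ncard < (f '' A.neighborSet a).ncard)
    (hfib : (B.induce (Prod.mk a ⁻¹' S)ᶜ).Connected) {b : β} (h : (a, b) ∈ Sᶜ) :
    ∃ (a' : α) (ha' : a' ∉ Prod.fst '' S),
      ((SierpinskiProd A B f).induce Sᶜ).Reachable ⟨(a, b), h⟩
        ⟨(a', f a), mk_mem_compl_of_fst_notMem ha' _⟩ := by
  obtain ⟨a', hadj, ha', hopen⟩ := A.exists_adj_fst_notMem_of_ncard_lt f hS a hcard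
  have hcross : ((SierpinskiProd A B f).induce Sᶜ).Adj ⟨_, hopen⟩
      ⟨_, mk_mem_compl_of_fst_notMem ha' (f a)⟩ := adj_of_adj hadj
  exact ⟨a', ha', (reachable_of_fibre_connected hfib h hopen).trans hcross.reachable⟩

theorem induce_compl_connected (hS : S.Finite)
    (hA : (A.induce (Prod.fst '' S)ᶜ).Connected)
    (hfib : ∀ a, (B.induce (Prod.mk a ⁻¹' S)ᶜ).Connected)
    (hcard : ∀ a, S.ncard < (f '' A.neighborSet a).ncard) :
    ((SierpinskiProd A B f).induce Sᶜ).Connected := by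
  obtain ⟨⟨a₀, ha₀⟩⟩ := hA.nonempty
  obtain ⟨⟨b₀, -⟩⟩ := (hfib a₀).nonempty
  have : Nonempty ↥Sᶜ := ⟨⟨(a₀, b₀), mk_mem_compl_of_fst_notMem ha₀ b₀⟩⟩
  refine ⟨fun ⟨⟨a₁, b₁⟩, h₁⟩ ⟨⟨a₂, b₂⟩, h₂⟩ ↦ ?_⟩
  obtain ⟨a₁', ha₁', r₁⟩ := exists_reachable_fst_notMem hS (hcard a₁) (hfib a₁) h₁
  obtain ⟨a₂', ha₂', r₂⟩ := exists_reachable_fst_notMem hS (hcard a₂) (hfib a₂) h₂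
  exact r₁.trans <| (reachable_of_reachable_fst hfib
    (hA.preconnected ⟨a₁', ha₁'⟩ ⟨a₂', ha₂'⟩) _ _).trans r₂.symm

end SierpinskiProd

theorem sierpinski_kConnected_general {α β : Type*} [Fintype α] [Fintype β]
    (k : ℕ)
    (A : SimpleGraph α) (B : SimpleGraph β) (f : α → β)
    (hA : KConnected k A) (hB : KConnected k B)
    (hf : ∀ a : α, k ≤ (f '' A.neighborSet a).ncard) :
    KConnected k (SierpinskiProd A B f) := by
  have : Nonempty β := Fintype.card_pos_iff.mp (k.zero_le.trans_lt hB.1)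
  refine ⟨?_, fun S hS ↦ ?_⟩
  · calc k < Fintype.card α := hA.1
      _ ≤ Fintype.card α * Fintype.card β := Nat.le_mul_of_pos_right _ Fintype.card_pos
      _ = Fintype.card (α × β) := (Fintype.card_prod α β).symm
  · refine SierpinskiProd.induce_compl_connected S.toFinite
      (hA.2 _ ((Set.ncard_image_le S.toFinite).trans_lt hS)) (fun a ↦ hB.2 _ ?_)
      (fun a ↦ hS.trans_le (hf a))
    exact (Set.ncard_preimage_prodMk_le S.toFinite a).trans_lt hS

/-- **Theorem.** If `A` and `B` are `k`-connected (`k ≥ 1`) and every vertex `a` of `A` has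
at least `k` distinct images of neighbours under `f`, then `A ⊗_f B` is `k`-connected. -/
theorem sierpinski_kConnected {α β : Type*} [Fintype α] [Fintype β]
    (k : ℕ) (hk : 1 ≤ k)
    (A : SimpleGraph α) (B : SimpleGraph β) (f : α → β)
    (hA : KConnected k A) (hB : KConnected k B)
    (hf : ∀ a : α, k ≤ (f '' A.neighborSet a).ncard) :
    KConnected k (SierpinskiProd A B f) :=
  sierpinski_kConnected_general k A B f hA hB hf
end

section
/- Let A be a simple graph, let B be a graph with exactly two vertices which are adjacent (i.e. B is isomorphic to K₂), and let f : V(A) → V(B) be a function such that the Sierpiński product A ⊗_f B is 3-connected. Then every vertex of A has degree at least 4 in A. -/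
/-! If `a` had degree at most `3` in `A`, then for one of the two values `b`, at most one
neighbour `c` of `a` has `f c = b`. The vertex `(a, b)` of `A ⊗_f K₂` then has at most two
neighbours, the other vertex `(a, b')` of its fibre and at most one `(c, f a)`, and deleting them
isolates it. -/

open SimpleGraph

/-- Deleting the neighbours of `v` isolates it. -/
theorem KConnected.le_ncard_neighborSet {V : Type*} [Fintype V] {k : ℕ} {G : SimpleGraph V}
    (hG : KConnected k G) (v : V) : k ≤ (G.neighborSet v).ncard := by
  by_contra! hlt
  set N := G.neighborSet v
  have hvN : v ∉ N := G.notMem_neighborSet_self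
  have hfew : (insert v N).ncard < Nat.card V := by
    have := Set.ncard_insert_le v N
    have := hG.1
    rw [Nat.card_eq_fintype_card]
    omega
  obtain ⟨w, hw⟩ := (Set.ne_univ_iff_exists_notMem (insert v N)).mp fun h =>
    hfew.ne (h ▸ Set.ncard_univ V)
  rw [Set.mem_insert_iff, not_or] at hw
  obtain ⟨p⟩ := (hG.2 N hlt).preconnected ⟨v, hvN⟩ ⟨w, hw.2⟩
  have hne : (⟨v, hvN⟩ : (Nᶜ : Set V)) ≠ ⟨w, hw.2⟩ := fun h => hw.1 (congrArg Subtype.val h).symm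
  exact (p.snd).2 (p.adj_snd (Walk.not_nil_of_ne hne))

theorem sierpinskiProd_neighborSet {α β : Type*} (A : SimpleGraph α) (B : SimpleGraph β)
    (f : α → β) (a : α) (b : β) :
    (SierpinskiProd A B f).neighborSet (a, b) =
      Prod.mk a '' B.neighborSet b ∪ (·, f a) '' {c ∈ A.neighborSet a | f c = b} := by
  ext ⟨x, y⟩
  simp only [mem_neighborSet, SierpinskiProd, Set.mem_union, Set.mem_image, Set.mem_ofPred_eq,
    Prod.mk.injEq]
  grind

theorem sierpinskiProd_ncard_neighborSet_le {α β : Type*} (A : SimpleGraph α)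
    (B : SimpleGraph β) (f : α → β) (a : α) (b : β) :
    ((SierpinskiProd A B f).neighborSet (a, b)).ncard ≤
      (B.neighborSet b).ncard + {c ∈ A.neighborSet a | f c = b}.ncard := by
  rw [sierpinskiProd_neighborSet,
    ← Set.ncard_image_of_injective (B.neighborSet b) (Prod.mk_right_injective a),
    ← Set.ncard_image_of_injective {c ∈ A.neighborSet a | f c = b}
      (Prod.mk_left_injective (f a))]
  exact Set.ncard_union_le _ _

theorem sierpinski_K2_min_degree_general {α β : Type*} [Fintype α] [Fintype β]
    (A : SimpleGraph α) (B : SimpleGraph β)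
    (hcard : Fintype.card β = 2)
    (f : α → β)
    (h3 : KConnected 3 (SierpinskiProd A B f)) :
    ∀ a : α, 4 ≤ (A.neighborSet a).ncard := by
  classical
  intro a
  by_contra! hdeg
  set N := (A.neighborSet a).toFinset
  obtain ⟨b, -, hb⟩ : ∃ b ∈ (Finset.univ : Finset β), (N.filter (f · = b)).card < 2 :=
    Finset.exists_card_fiber_lt_of_card_lt_mul (by
      rw [Finset.card_univ, hcard, ← Set.ncard_eq_toFinset_card']; omega)
  have hfibre : {c ∈ A.neighborSet a | f c = b}.ncard < 2 := by
    have hcoe : {c ∈ A.neighborSet a | f c = b} = ↑(N.filter (f · = b)) := by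
      ext; simp [N]
    rwa [hcoe, Set.ncard_coe_finset]
  have hB : (B.neighborSet b).ncard < 2 := by
    have := Set.ncard_lt_card (s := B.neighborSet b) fun h =>
      B.notMem_neighborSet_self (h ▸ Set.mem_univ b)
    rwa [Nat.card_eq_fintype_card, hcard] at this
  have hconn := h3.le_ncard_neighborSet (a, b)
  have hprod := sierpinskiProd_ncard_neighborSet_le A B f a b
  omega

/-- **Lemma.** If `B` is the complete graph on two vertices and `A ⊗_f B` is `3`-connected,
then every vertex of `A` has degree at least `4`. -/
theorem sierpinski_K2_min_degree {α β : Type*} [Fintype α] [Fintype β]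
    (A : SimpleGraph α) (B : SimpleGraph β)
    (hcard : Fintype.card β = 2) (hadj : ∀ x y : β, x ≠ y → B.Adj x y)
    (f : α → β)
    (h3 : KConnected 3 (SierpinskiProd A B f)) :
    ∀ a : α, 4 ≤ (A.neighborSet a).ncard :=
  sierpinski_K2_min_degree_general A B hcard f h3
end
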